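/- Let X ∈ St(n,r), let f : ℝ^{n×r} → ℝ be differentiable with L-Lipschitz gradient and ‖∇f(X)‖ ≤ ϱ, let h : ℝ^{n×r} → ℝ be convex and L_h-Lipschitz, and set F := f + h and c₂ := ϱM₂ + (1/2)LM₁² + L_hM₂ for constants M₁, M₂ > 0. Let B : ℝ^{n×r} → ℝ^{n×r} be self-adjoint for the trace inner product, map T_X into itself, and satisfy ⟨V,BV⟩ ≥ κ₁‖V‖² for all V ∈ T_X with κ₁ > 0. Let V* minimize φ(V) := ⟨∇f(X),V⟩ + (1/2)⟨V,BV⟩ + h(X+V) over T_X, and let R : T_X → ℝ^{n×r} be any map satisfying ‖R(ξ) − X‖ ≤ M₁‖ξ‖ and ‖R(ξ) − X − ξ‖ ≤ M₂‖ξ‖² for all ξ ∈ T_X. Let σ ∈ (0,1) and set ᾱ := min{1, (2−σ)κ₁/(2c₂)}. Then for every α with 0 < α ≤ ᾱ, F(R(αV*)) ≤ F(X) − (σα/2)⟨V*, B V*⟩. -/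

import Mathlib

/-!
Because `V*` minimizes `φ` in particular along the segment `c • V*`, `c ∈ (0,1)`, convexity of `h`
gives `⟨∇f(X),V*⟩ + h(X+V*) - h(X) ≤ -(1+c)/2 ⟨V*,BV*⟩`, hence `≤ -⟨V*,BV*⟩` as `c → 1`.
The descent lemma for `f`, the Lipschitz bound for `h` and the two estimates on `R` give
`F(R(αV*)) ≤ F(X) + α (⟨∇f(X),V*⟩ + h(X+V*) - h(X)) + c₂ α² ‖V*‖²`, using convexity once more
for `h(X + αV*)`. Finally `α ≤ (2-σ)κ₁/(2c₂)` and `κ₁‖V*‖² ≤ ⟨V*,BV*⟩` bound the quadratic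
term by `(1 - σ/2) α ⟨V*,BV*⟩`.
-/

open Matrix

/-- The trace inner product `⟨A, B⟩ = tr(AᵀB)` on `ℝ^{n×r}`. -/
noncomputable def tinner {n r : ℕ} (A B : Matrix (Fin n) (Fin r) ℝ) : ℝ := (Aᵀ * B).trace

/-- `V` belongs to the tangent space `T_X = {V : VᵀX + XᵀV = 0}` of the Stiefel manifold at `X`. -/
def IsTangent {n r : ℕ} (X V : Matrix (Fin n) (Fin r) ℝ) : Prop := Vᵀ * X + Xᵀ * V = 0

-- The norm `‖·‖` below is the Frobenius norm, associated to the trace inner product.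
attribute [local instance] Matrix.frobeniusNormedAddCommGroup Matrix.frobeniusNormedSpace

open Set Filter Topology WithLp

theorem nonneg_of_forall_norm_sub_le_mul {E F : Type*} [NormedAddCommGroup E] [Nontrivial E]
    [SeminormedAddCommGroup F] {u : E → F} {K : ℝ} (hu : ∀ a b, ‖u a - u b‖ ≤ K * ‖a - b‖) :
    0 ≤ K := by
  obtain ⟨a, ha⟩ := exists_ne (0 : E)
  have hpos : 0 < ‖a - 0‖ := by simpa using ha
  exact nonneg_of_mul_nonneg_left ((norm_nonneg _).trans (hu a 0)) hpos

theorem ConvexOn.map_add_smul_le {E : Type*} [AddCommGroup E] [Module ℝ E] {h : E → ℝ}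
    (hh : ConvexOn ℝ univ h) (X V : E) {c : ℝ} (hc₀ : 0 ≤ c) (hc₁ : c ≤ 1) :
    h (X + c • V) ≤ (1 - c) * h X + c * h (X + V) := by
  have := hh.2 (mem_univ X) (mem_univ (X + V)) (sub_nonneg.2 hc₁) hc₀ (by ring)
  rwa [show (1 - c) • X + c • (X + V) = X + c • V by module] at this

theorem add_sub_le_neg_of_forall_le_smul {E : Type*} [AddCommGroup E] [Module ℝ E]
    {ℓ q h : E → ℝ} (hh : ConvexOn ℝ univ h) {X V : E}
    (hℓ : ∀ c : ℝ, ℓ (c • V) = c * ℓ V) (hq : ∀ c : ℝ, q (c • V) = c ^ 2 * q V)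
    (hmin : ∀ c ∈ Ioo (0 : ℝ) 1,
      ℓ V + 1 / 2 * q V + h (X + V) ≤ ℓ (c • V) + 1 / 2 * q (c • V) + h (X + c • V)) :
    ℓ V + h (X + V) - h X ≤ -q V := by
  have hc : ∀ c ∈ Ioo (0 : ℝ) 1, ℓ V + h (X + V) - h X ≤ -((1 + c) / 2) * q V := by
    rintro c ⟨hc₀, hc₁⟩
    have hconv := hh.map_add_smul_le X V hc₀.le hc₁.le
    have := hmin c ⟨hc₀, hc₁⟩
    rw [hℓ, hq] at this
    -- together they give `(1 - c) * (ℓ V + h (X + V) - h X) ≤ -(1 - c) * (1 + c) / 2 * q V`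
    nlinarith [sub_pos.2 hc₁]
  have hlim : Tendsto (fun c : ℝ => -((1 + c) / 2) * q V) (𝓝[<] 1) (𝓝 (-q V)) := by
    have : Continuous (fun c : ℝ => -((1 + c) / 2) * q V) := by fun_prop
    simpa [one_add_one_eq_two] using (this.tendsto 1).mono_left nhdsWithin_le_nhds
  exact ge_of_tendsto hlim (eventually_of_mem (Ioo_mem_nhdsLT zero_lt_one) hc)

theorem mul_sq_le_of_le_div {α σ κ c Q N : ℝ} (hα : 0 < α) (hαc : α ≤ (2 - σ) * κ / (2 * c))
    (hσ : σ ≤ 2) (hκ : 0 ≤ κ) (hQ : κ * N ^ 2 ≤ Q) :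
    c * (α * N) ^ 2 ≤ (2 - σ) / 2 * α * Q := by
  have hσα : 0 ≤ (2 - σ) / 2 * α := by have := sub_nonneg.2 hσ; positivity
  refine le_trans ?_ (mul_le_mul_of_nonneg_left hQ hσα)
  rcases le_or_gt c 0 with hc | hc
  · exact (mul_nonpos_of_nonpos_of_nonneg hc (sq_nonneg _)).trans (by positivity)
  · rw [le_div_iff₀ (by positivity)] at hαc
    nlinarith [mul_le_mul_of_nonneg_right hαc (mul_nonneg hα.le (sq_nonneg N))]

section MatrixSpace

variable {n r : ℕ}

theorem tinner_sub_left (A B C : Matrix (Fin n) (Fin r) ℝ) :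
    tinner (A - B) C = tinner A C - tinner B C := by
  simp [tinner, Matrix.sub_mul, Matrix.trace_sub]

theorem tinner_smul_left (c : ℝ) (A B : Matrix (Fin n) (Fin r) ℝ) :
    tinner (c • A) B = c * tinner A B := by
  simp [tinner, Matrix.trace_smul]

theorem tinner_smul_right (c : ℝ) (A B : Matrix (Fin n) (Fin r) ℝ) :
    tinner A (c • B) = c * tinner A B := by
  simp [tinner, Matrix.trace_smul]

theorem tinner_sub_right (A B C : Matrix (Fin n) (Fin r) ℝ) :
    tinner A (B - C) = tinner A B - tinner A C := by
  simp [tinner, Matrix.mul_sub, Matrix.trace_sub]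

-- The Frobenius norm is by construction the norm of `PiLp 2 (fun _ ↦ PiLp 2 (fun _ ↦ ℝ))`.
theorem tinner_eq_inner (A B : Matrix (Fin n) (Fin r) ℝ) :
    tinner A B = inner ℝ (toLp 2 fun i => toLp 2 (A i)) (toLp 2 fun i => toLp 2 (B i)) := by
  simp only [tinner, Matrix.trace, Matrix.diag, Matrix.mul_apply, Matrix.transpose_apply,
    PiLp.inner_apply, RCLike.inner_apply, conj_trivial, mul_comm (A _ _)]
  exact Finset.sum_comm

theorem abs_tinner_le_norm (A B : Matrix (Fin n) (Fin r) ℝ) : |tinner A B| ≤ ‖A‖ * ‖B‖ := by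
  rw [tinner_eq_inner]
  exact abs_real_inner_le_norm _ _

theorem IsTangent.smul {X V : Matrix (Fin n) (Fin r) ℝ} (hV : IsTangent X V) (c : ℝ) :
    IsTangent X (c • V) := by
  unfold IsTangent at *
  rw [Matrix.transpose_smul, Matrix.smul_mul, Matrix.mul_smul, ← smul_add, hV, smul_zero]

theorem le_add_tinner_add_sq {f : Matrix (Fin n) (Fin r) ℝ → ℝ}
    {g : Matrix (Fin n) (Fin r) ℝ → Matrix (Fin n) (Fin r) ℝ}
    {Lf : Matrix (Fin n) (Fin r) ℝ → (Matrix (Fin n) (Fin r) ℝ →L[ℝ] ℝ)}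
    (hf : ∀ Z, HasFDerivAt f (Lf Z) Z) (hGrad : ∀ Z V, Lf Z V = tinner (g Z) V) {L : ℝ}
    (hg : ∀ A B, ‖g A - g B‖ ≤ L * ‖A - B‖) (x v : Matrix (Fin n) (Fin r) ℝ) :
    f (x + v) ≤ f x + tinner (g x) v + L / 2 * ‖v‖ ^ 2 := by
  set ψ : ℝ → ℝ := fun t => f (x + t • v) - t * tinner (g x) v - L / 2 * t ^ 2 * ‖v‖ ^ 2
  have hψ : ∀ t,
      HasDerivAt ψ (tinner (g (x + t • v)) v - tinner (g x) v - L * t * ‖v‖ ^ 2) t := by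
    intro t
    have hline : HasDerivAt (fun s : ℝ => x + s • v) v t := by
      have := ((hasDerivAt_id' t).smul_const v).const_add x
      rwa [one_smul] at this
    have hfline : HasDerivAt (fun s : ℝ => f (x + s • v)) (Lf (x + t • v) v) t :=
      (hf _).comp_hasDerivAt t hline
    rw [hGrad] at hfline
    exact ((hfline.sub ((hasDerivAt_id t).mul_const (tinner (g x) v))).sub
      (((hasDerivAt_pow 2 t).const_mul (L / 2)).mul_const (‖v‖ ^ 2))).congr_deriv
      (by simp only [Nat.cast_ofNat, Nat.add_one_sub_one, pow_one]; ring)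
  have hψ'_nonpos : ∀ t ∈ interior (Ici (0 : ℝ)),
      tinner (g (x + t • v)) v - tinner (g x) v - L * t * ‖v‖ ^ 2 ≤ 0 := by
    intro t ht
    rw [interior_Ici, mem_Ioi] at ht
    have : tinner (g (x + t • v) - g x) v ≤ L * t * ‖v‖ ^ 2 := calc
      tinner (g (x + t • v) - g x) v ≤ ‖g (x + t • v) - g x‖ * ‖v‖ :=
        (le_abs_self _).trans (abs_tinner_le_norm _ _)
      _ ≤ L * ‖t • v‖ * ‖v‖ := by gcongr; simpa using hg (x + t • v) x
      _ = L * t * ‖v‖ ^ 2 := by rw [norm_smul, Real.norm_of_nonneg ht.le]; ring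
    rw [tinner_sub_left] at this
    linarith
  have hψ_anti : AntitoneOn ψ (Ici 0) :=
    antitoneOn_of_hasDerivWithinAt_nonpos (convex_Ici 0)
      (fun t _ => (hψ t).continuousAt.continuousWithinAt) (fun t _ => (hψ t).hasDerivWithinAt)
      hψ'_nonpos
  have := hψ_anti self_mem_Ici (mem_Ici.2 zero_le_one) zero_le_one
  simp only [ψ] at this
  norm_num at this
  linarith

theorem add_le_of_retraction_bounds {f h : Matrix (Fin n) (Fin r) ℝ → ℝ}
    {g : Matrix (Fin n) (Fin r) ℝ → Matrix (Fin n) (Fin r) ℝ}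
    {Lf : Matrix (Fin n) (Fin r) ℝ → (Matrix (Fin n) (Fin r) ℝ →L[ℝ] ℝ)}
    (hf : ∀ Z, HasFDerivAt f (Lf Z) Z) (hGrad : ∀ Z V, Lf Z V = tinner (g Z) V) {L Lh M₁ M₂ : ℝ}
    (hg : ∀ A B, ‖g A - g B‖ ≤ L * ‖A - B‖) (hh : ∀ A B, |h A - h B| ≤ Lh * ‖A - B‖)
    {X ξ Y : Matrix (Fin n) (Fin r) ℝ} (hY₁ : ‖Y - X‖ ≤ M₁ * ‖ξ‖)
    (hY₂ : ‖Y - X - ξ‖ ≤ M₂ * ‖ξ‖ ^ 2) :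
    f Y + h Y ≤ f X + tinner (g X) ξ + h (X + ξ) +
      (‖g X‖ * M₂ + L / 2 * M₁ ^ 2 + Lh * M₂) * ‖ξ‖ ^ 2 := by
  -- on the zero space the Lipschitz constants `L`, `Lh` may be negative
  rcases eq_or_ne ξ 0 with rfl | hξ
  · obtain rfl : Y = X := by simpa [sub_eq_zero] using hY₁
    simp [tinner]
  have : Nontrivial (Matrix (Fin n) (Fin r) ℝ) := nontrivial_of_ne ξ 0 hξ
  have hL := nonneg_of_forall_norm_sub_le_mul hg
  have hLh := nonneg_of_forall_norm_sub_le_mul (u := h) hh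
  have hf_step : f Y ≤ f X + tinner (g X) (Y - X) + L / 2 * ‖Y - X‖ ^ 2 := by
    simpa using le_add_tinner_add_sq hf hGrad hg X (Y - X)
  have hlin : tinner (g X) (Y - X) ≤ tinner (g X) ξ + ‖g X‖ * (M₂ * ‖ξ‖ ^ 2) := calc
    tinner (g X) (Y - X) = tinner (g X) ξ + tinner (g X) (Y - X - ξ) := by
      rw [tinner_sub_right _ (Y - X) ξ]; ring
    _ ≤ tinner (g X) ξ + ‖g X‖ * ‖Y - X - ξ‖ := by
      gcongr; exact (le_abs_self _).trans (abs_tinner_le_norm _ _)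
    _ ≤ tinner (g X) ξ + ‖g X‖ * (M₂ * ‖ξ‖ ^ 2) := by gcongr
  have hquad : L / 2 * ‖Y - X‖ ^ 2 ≤ L / 2 * (M₁ ^ 2 * ‖ξ‖ ^ 2) := by
    rw [← mul_pow]; gcongr
  have hh_step : h Y ≤ h (X + ξ) + Lh * (M₂ * ‖ξ‖ ^ 2) := calc
    h Y ≤ h (X + ξ) + Lh * ‖Y - (X + ξ)‖ := by linarith [(le_abs_self _).trans (hh Y (X + ξ))]
    _ ≤ h (X + ξ) + Lh * (M₂ * ‖ξ‖ ^ 2) := by rw [← sub_sub]; gcongr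
  linarith

end MatrixSpace

theorem stmt4_general {n r : ℕ} (X : Matrix (Fin n) (Fin r) ℝ)
    (f h : Matrix (Fin n) (Fin r) ℝ → ℝ)
    -- `f` is differentiable with gradient function `g = ∇f`, which is `L`-Lipschitz
    (g : Matrix (Fin n) (Fin r) ℝ → Matrix (Fin n) (Fin r) ℝ)
    (Lf : Matrix (Fin n) (Fin r) ℝ → (Matrix (Fin n) (Fin r) ℝ →L[ℝ] ℝ))
    (hf : ∀ Z, HasFDerivAt f (Lf Z) Z) (hGrad : ∀ Z V, Lf Z V = tinner (g Z) V)
    (L Lh ϱ M₁ M₂ κ₁ σ : ℝ)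
    (hLipg : ∀ A B, ‖g A - g B‖ ≤ L * ‖A - B‖)
    (hgX : ‖g X‖ ≤ ϱ)
    -- `h` is convex and `L_h`-Lipschitz
    (hconv : ConvexOn ℝ Set.univ h)
    (hLiph : ∀ A B, |h A - h B| ≤ Lh * ‖A - B‖)
    (hM₂ : 0 < M₂) (hκ₁ : 0 < κ₁) (hσ : σ ∈ Set.Ioo (0 : ℝ) 1)
    -- `B` is linear, self-adjoint for the trace inner product, maps `T_X` into itself,
    -- and satisfies `⟨V,BV⟩ ≥ κ₁‖V‖²` on `T_X`
    (B : Matrix (Fin n) (Fin r) ℝ →ₗ[ℝ] Matrix (Fin n) (Fin r) ℝ)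
    (hBlow : ∀ V, IsTangent X V → κ₁ * ‖V‖ ^ 2 ≤ tinner V (B V))
    -- the objective `φ(V) = ⟨∇f(X),V⟩ + (1/2)⟨V,BV⟩ + h(X+V)` and its minimizer `V*` over `T_X`
    (φ : Matrix (Fin n) (Fin r) ℝ → ℝ)
    (hφ : ∀ V, φ V = tinner (g X) V + (1 / 2) * tinner V (B V) + h (X + V))
    (Vs : Matrix (Fin n) (Fin r) ℝ) (hVs : IsTangent X Vs)
    (hmin : ∀ V, IsTangent X V → φ Vs ≤ φ V)
    -- the retraction-like map `R`
    (R : Matrix (Fin n) (Fin r) ℝ → Matrix (Fin n) (Fin r) ℝ)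
    (hR1 : ∀ ξ, IsTangent X ξ → ‖R ξ - X‖ ≤ M₁ * ‖ξ‖)
    (hR2 : ∀ ξ, IsTangent X ξ → ‖R ξ - X - ξ‖ ≤ M₂ * ‖ξ‖ ^ 2) :
    ∀ α : ℝ, 0 < α →
      α ≤ min 1 ((2 - σ) * κ₁ / (2 * (ϱ * M₂ + (1 / 2) * L * M₁ ^ 2 + Lh * M₂))) →
      f (R (α • Vs)) + h (R (α • Vs)) ≤ f X + h X - σ * α / 2 * tinner Vs (B Vs) := by
  intro α hα hα_le
  have hα₁ : α ≤ 1 := hα_le.trans (min_le_left _ _)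
  have hQ : κ₁ * ‖Vs‖ ^ 2 ≤ tinner Vs (B Vs) := hBlow Vs hVs
  have hdecr : tinner (g X) Vs + h (X + Vs) - h X ≤ -tinner Vs (B Vs) :=
    add_sub_le_neg_of_forall_le_smul (q := fun V => tinner V (B V)) hconv
      (fun c => tinner_smul_right c _ _)
      (fun c => by simp only [map_smul, tinner_smul_left, tinner_smul_right]; ring)
      (fun c _ => by simpa only [hφ] using hmin (c • Vs) (hVs.smul c))
  have hstep := add_le_of_retraction_bounds hf hGrad hLipg hLiph (hR1 _ (hVs.smul α))
    (hR2 _ (hVs.smul α))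
  rw [norm_smul, Real.norm_of_nonneg hα.le, tinner_smul_right] at hstep
  have hconst : (‖g X‖ * M₂ + L / 2 * M₁ ^ 2 + Lh * M₂) * (α * ‖Vs‖) ^ 2 ≤
      (ϱ * M₂ + (1 / 2) * L * M₁ ^ 2 + Lh * M₂) * (α * ‖Vs‖) ^ 2 := by
    gcongr ?_ * _
    linarith [mul_le_mul_of_nonneg_right hgX hM₂.le]
  have hsize := mul_sq_le_of_le_div hα (hα_le.trans (min_le_right _ _)) (by linarith [hσ.2])
    hκ₁.le hQ
  linarith [hconv.map_add_smul_le X Vs hα.le hα₁, mul_le_mul_of_nonneg_left hdecr hα.le]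

theorem stmt4 {n r : ℕ} (X : Matrix (Fin n) (Fin r) ℝ) (hX : Xᵀ * X = 1)
    (f h : Matrix (Fin n) (Fin r) ℝ → ℝ)
    -- `f` is differentiable with gradient function `g = ∇f`, which is `L`-Lipschitz
    (g : Matrix (Fin n) (Fin r) ℝ → Matrix (Fin n) (Fin r) ℝ)
    (Lf : Matrix (Fin n) (Fin r) ℝ → (Matrix (Fin n) (Fin r) ℝ →L[ℝ] ℝ))
    (hf : ∀ Z, HasFDerivAt f (Lf Z) Z) (hGrad : ∀ Z V, Lf Z V = tinner (g Z) V)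
    (L Lh ϱ M₁ M₂ κ₁ σ : ℝ)
    (hLipg : ∀ A B, ‖g A - g B‖ ≤ L * ‖A - B‖)
    (hgX : ‖g X‖ ≤ ϱ)
    -- `h` is convex and `L_h`-Lipschitz
    (hconv : ConvexOn ℝ Set.univ h)
    (hLiph : ∀ A B, |h A - h B| ≤ Lh * ‖A - B‖)
    (hM₁ : 0 < M₁) (hM₂ : 0 < M₂) (hκ₁ : 0 < κ₁) (hσ : σ ∈ Set.Ioo (0 : ℝ) 1)
    -- `B` is linear, self-adjoint for the trace inner product, maps `T_X` into itself,
    -- and satisfies `⟨V,BV⟩ ≥ κ₁‖V‖²` on `T_X`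
    (B : Matrix (Fin n) (Fin r) ℝ →ₗ[ℝ] Matrix (Fin n) (Fin r) ℝ)
    (hBsa : ∀ U V, tinner U (B V) = tinner (B U) V)
    (hBtan : ∀ V, IsTangent X V → IsTangent X (B V))
    (hBlow : ∀ V, IsTangent X V → κ₁ * ‖V‖ ^ 2 ≤ tinner V (B V))
    -- the objective `φ(V) = ⟨∇f(X),V⟩ + (1/2)⟨V,BV⟩ + h(X+V)` and its minimizer `V*` over `T_X`
    (φ : Matrix (Fin n) (Fin r) ℝ → ℝ)
    (hφ : ∀ V, φ V = tinner (g X) V + (1 / 2) * tinner V (B V) + h (X + V))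
    (Vs : Matrix (Fin n) (Fin r) ℝ) (hVs : IsTangent X Vs)
    (hmin : ∀ V, IsTangent X V → φ Vs ≤ φ V)
    -- the retraction-like map `R`
    (R : Matrix (Fin n) (Fin r) ℝ → Matrix (Fin n) (Fin r) ℝ)
    (hR1 : ∀ ξ, IsTangent X ξ → ‖R ξ - X‖ ≤ M₁ * ‖ξ‖)
    (hR2 : ∀ ξ, IsTangent X ξ → ‖R ξ - X - ξ‖ ≤ M₂ * ‖ξ‖ ^ 2) :
    ∀ α : ℝ, 0 < α →
      α ≤ min 1 ((2 - σ) * κ₁ / (2 * (ϱ * M₂ + (1 / 2) * L * M₁ ^ 2 + Lh * M₂))) →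
      f (R (α • Vs)) + h (R (α • Vs)) ≤ f X + h X - σ * α / 2 * tinner Vs (B Vs) :=
  stmt4_general X f h g Lf hf hGrad L Lh ϱ M₁ M₂ κ₁ σ hLipg hgX hconv hLiph hM₂ hκ₁ hσ B hBlow φ hφ
    Vs hVs hmin R hR1 hR2
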